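/- arXiv:2405.06734 — 5 statements merged into one kernel-verified Lean document; each statement's English description precedes it below -/
import Mathlib

section
/- Let μ, ν be probability measures on compact sets 𝒳, 𝒴 respectively, let c be a bounded measurable cost, and let ε > 0. Suppose (φ₀, ψ₀) ∈ L¹(μ) × L¹(ν) is a pair of dual potentials maximizing the dual EOT functional D(φ,ψ) = ∫φ dμ + ∫ψ dν - ε∫exp((φ(x)+ψ(y)-c(x,y))/ε) dμ⊗ν + ε. Define φ(x) = -ε log ∫ exp((ψ₀(y)-c(x,y))/ε) dν(y) and ψ = φ^{c,ε} (the (c,ε)-transform of φ with respect to μ). Then D(φ, ψ) ≥ D(φ₀, ψ₀), so (φ, ψ) is also a maximizing pair; moreover φ = φ₀ μ-a.s. and ψ = ψ₀ ν-a.s. -/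
open MeasureTheory Filter Real

/-- The full EOT dual objective
`D(φ,ψ) = ∫φ dμ + ∫ψ dν - ε ∫ exp((φ⊕ψ-c)/ε) d(μ⊗ν) + ε`. -/
noncomputable def dualObj {α β : Type*} [MeasurableSpace α] [MeasurableSpace β]
    (μ : Measure α) (ν : Measure β) (c : α → β → ℝ) (ε : ℝ)
    (φ : α → ℝ) (ψ : β → ℝ) : ℝ :=
  ∫ x, φ x ∂μ + ∫ y, ψ y ∂ν
    - ε * ∫ p, Real.exp ((φ p.1 + ψ p.2 - c p.1 p.2) / ε) ∂(μ.prod ν) + ε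

/-! Replacing `φ₀` by the `(c,ε)`-transform `φ` of `ψ₀` makes the exponential term integrate
to `1`, and a Fubini computation gives
`D(φ, ψ₀) - D(φ₀, ψ₀) = ∫ (ε e^{(φ₀ - φ)/ε} - (φ₀ - φ) - ε) dμ ≥ 0`,
with equality exactly when `φ = φ₀` μ-a.e., since `e^t ≥ 1 + t` with equality only at `t = 0`.
Maximality of `(φ₀, ψ₀)` forces equality; the same argument with the roles of the marginals
swapped handles `ψ`. Boundedness of `c` keeps `φ` within `Mc` of a constant, so `φ ∈ L¹(μ)`.
Maximality also gives the integrability of the exponential term that Fubini needs: otherwise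
`D(φ₀ + 1, ψ₀) = D(φ₀, ψ₀) + 1`. -/

lemma mul_exp_div_sub_sub_nonneg {ε : ℝ} (hε : 0 < ε) (a : ℝ) :
    0 ≤ ε * exp (a / ε) - a - ε := by
  have h := mul_le_mul_of_nonneg_left (add_one_le_exp (a / ε)) hε.le
  rw [mul_add, mul_one, mul_div_cancel₀ a hε.ne'] at h
  linarith

lemma mul_exp_div_sub_sub_eq_zero_iff {ε : ℝ} (hε : 0 < ε) {a : ℝ} :
    ε * exp (a / ε) - a - ε = 0 ↔ a = 0 := by
  refine ⟨fun h => ?_, fun h => by simp [h]⟩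
  by_contra ha
  have hlt := mul_lt_mul_of_pos_left (add_one_lt_exp (div_ne_zero ha hε.ne')) hε
  rw [mul_add, mul_one, mul_div_cancel₀ a hε.ne'] at hlt
  linarith

lemma MeasureTheory.Integrable.exp_add_div_of_le {γ : Type*} [MeasurableSpace γ] {m : Measure γ}
    {f g : γ → ℝ} {ε M : ℝ} (hε : 0 ≤ ε) (hf : Integrable (fun z => exp (f z / ε)) m)
    (hg : AEMeasurable g m) (hgM : ∀ z, g z ≤ M) :
    Integrable (fun z => exp ((f z + g z) / ε)) m := by
  have hmul : (fun z => exp ((f z + g z) / ε)) = fun z => exp (g z / ε) * exp (f z / ε) := by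
    funext z
    rw [← exp_add, add_div, add_comm]
  rw [hmul]
  refine hf.bdd_mul (c := exp (M / ε))
    (measurable_exp.comp_aemeasurable (hg.div_const ε)).aestronglyMeasurable
    (Eventually.of_forall fun z => ?_)
  rw [norm_eq_abs, abs_exp]
  exact exp_le_exp.2 (div_le_div_of_nonneg_right (hgM z) hε)

section EntropicTransform

variable {α β : Type*} [MeasurableSpace β] {ν : Measure β} {c : α → β → ℝ} {ε Mc : ℝ}
  {ψ : β → ℝ}

/-- The `(c,ε)`-transform `ψ^{c,ε}` of `ψ` with respect to `ν`. -/
noncomputable def entropicTransform (ν : Measure β) (c : α → β → ℝ) (ε : ℝ) (ψ : β → ℝ) (x : α) :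
    ℝ :=
  -ε * log (∫ y, exp ((ψ y - c x y) / ε) ∂ν)

lemma integral_exp_add_sub_cost [NeZero ν] (hε : ε ≠ 0) {x : α}
    (hint : Integrable (fun y => exp ((ψ y - c x y) / ε)) ν) (a : ℝ) :
    ∫ y, exp ((a + ψ y - c x y) / ε) ∂ν = exp ((a - entropicTransform ν c ε ψ x) / ε) := by
  have hpos := integral_exp_pos hint
  calc ∫ y, exp ((a + ψ y - c x y) / ε) ∂ν
      = exp (a / ε) * ∫ y, exp ((ψ y - c x y) / ε) ∂ν := by
        rw [← integral_const_mul]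
        simp only [← exp_add]
        congr with y
        congr 1
        ring
    _ = exp ((a - entropicTransform ν c ε ψ x) / ε) := by
        rw [entropicTransform, sub_div, neg_mul, neg_div, sub_neg_eq_add,
          mul_div_cancel_left₀ _ hε, exp_add, exp_log hpos]

variable [MeasurableSpace α] {μ : Measure α} {φ₀ : α → ℝ}

structure IsDualMaximizer (μ : Measure α) (ν : Measure β) (c : α → β → ℝ) (ε : ℝ) (φ : α → ℝ)
    (ψ : β → ℝ) : Prop where
  integrable_left : Integrable φ μ
  integrable_right : Integrable ψ ν
  dualObj_le : ∀ φ' ψ', Integrable φ' μ → Integrable ψ' ν →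
    dualObj μ ν c ε φ' ψ' ≤ dualObj μ ν c ε φ ψ

lemma dualObj_swap [SFinite μ] [SFinite ν] (φ : α → ℝ) (ψ : β → ℝ) :
    dualObj ν μ (fun y x => c x y) ε ψ φ = dualObj μ ν c ε φ ψ := by
  have h : ∫ p, exp ((ψ p.1 + φ p.2 - c p.2 p.1) / ε) ∂(ν.prod μ)
      = ∫ p, exp ((φ p.1 + ψ p.2 - c p.1 p.2) / ε) ∂(μ.prod ν) := by
    rw [← integral_prod_swap]
    simp only [Prod.fst_swap, Prod.snd_swap, add_comm]
  simp only [dualObj, h]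
  ring

lemma IsDualMaximizer.swap [SFinite μ] [SFinite ν] {φ : α → ℝ} (h : IsDualMaximizer μ ν c ε φ ψ) :
    IsDualMaximizer ν μ (fun y x => c x y) ε ψ φ where
  integrable_left := h.integrable_right
  integrable_right := h.integrable_left
  dualObj_le ψ' φ' hψ' hφ' := by
    simpa only [dualObj_swap] using h.dualObj_le φ' ψ' hφ' hψ'

lemma integrable_exp_of_dualObj_add_one_le [IsProbabilityMeasure μ] (hφ₀ : Integrable φ₀ μ)
    (hle : dualObj μ ν c ε (fun x => φ₀ x + 1) ψ ≤ dualObj μ ν c ε φ₀ ψ) :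
    Integrable (fun p => exp ((φ₀ p.1 + ψ p.2 - c p.1 p.2) / ε)) (μ.prod ν) := by
  by_contra hni
  have hni' : ¬ Integrable (fun p => exp ((φ₀ p.1 + 1 + ψ p.2 - c p.1 p.2) / ε)) (μ.prod ν) := by
    refine fun h => hni ((h.const_mul (exp (-(1 / ε)))).congr
      (Eventually.of_forall fun p => ?_))
    simp only [← exp_add]
    congr 1
    ring
  simp only [dualObj] at hle
  rw [integral_undef hni, integral_undef hni', integral_add hφ₀ (integrable_const 1),
    integral_const, probReal_univ, one_smul] at hle
  linarith

lemma integrable_exp_div_of_integrable_prod [SFinite μ] [NeZero μ] [SFinite ν]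
    (hε : 0 ≤ ε) (hcm : Measurable fun p : α × β => c p.1 p.2) (hcb : ∀ x y, |c x y| ≤ Mc)
    (hE : Integrable (fun p => exp ((φ₀ p.1 + ψ p.2 - c p.1 p.2) / ε)) (μ.prod ν)) :
    Integrable (fun y => exp (ψ y / ε)) ν := by
  obtain ⟨x₀, hx₀⟩ := hE.prod_right_ae.exists
  have h := hx₀.exp_add_div_of_le hε (g := fun y => c x₀ y - φ₀ x₀) (M := Mc - φ₀ x₀)
    ((hcm.comp measurable_prodMk_left).sub_const _).aemeasurable
    (fun y => by linarith [(abs_le.1 (hcb x₀ y)).2])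
  simpa using h

lemma integrable_exp_sub_cost (hε : 0 ≤ ε) (hcm : Measurable fun p : α × β => c p.1 p.2)
    (hcb : ∀ x y, |c x y| ≤ Mc) (hψ : Integrable (fun y => exp (ψ y / ε)) ν) (x : α) :
    Integrable (fun y => exp ((ψ y - c x y) / ε)) ν := by
  simpa only [sub_eq_add_neg] using hψ.exp_add_div_of_le hε (g := fun y => -c x y)
    (hcm.comp measurable_prodMk_left).neg.aemeasurable
    (fun y => neg_le.1 (abs_le.1 (hcb x y)).1)

lemma abs_entropicTransform_add_le [NeZero ν] (hε : 0 < ε)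
    (hcm : Measurable fun p : α × β => c p.1 p.2) (hcb : ∀ x y, |c x y| ≤ Mc)
    (hψ : Integrable (fun y => exp (ψ y / ε)) ν) (x : α) :
    |entropicTransform ν c ε ψ x + ε * log (∫ y, exp (ψ y / ε) ∂ν)| ≤ Mc := by
  set B := ∫ y, exp (ψ y / ε) ∂ν
  set A := ∫ y, exp ((ψ y - c x y) / ε) ∂ν
  have hslice := integrable_exp_sub_cost hε.le hcm hcb hψ x
  have hB : 0 < B := integral_exp_pos hψ
  have hlow : exp (-Mc / ε) * B ≤ A := by
    rw [← integral_const_mul]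
    refine integral_mono (hψ.const_mul _) hslice fun y => ?_
    rw [← exp_add, ← add_div, exp_le_exp, div_le_div_iff_of_pos_right hε]
    linarith [(abs_le.1 (hcb x y)).2]
  have hup : A ≤ exp (Mc / ε) * B := by
    rw [← integral_const_mul]
    refine integral_mono hslice (hψ.const_mul _) fun y => ?_
    rw [← exp_add, ← add_div, exp_le_exp, div_le_div_iff_of_pos_right hε]
    linarith [(abs_le.1 (hcb x y)).1]
  have hlow' := log_le_log (by positivity) hlow
  have hup' := log_le_log (integral_exp_pos hslice) hup
  rw [log_mul (exp_ne_zero _) hB.ne', log_exp] at hlow' hup'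
  have hdiff : |log A - log B| ≤ Mc / ε :=
    abs_le.2 ⟨by rw [neg_div] at hlow'; linarith, by linarith⟩
  calc |entropicTransform ν c ε ψ x + ε * log B| = ε * |log A - log B| := by
        rw [show entropicTransform ν c ε ψ x + ε * log B = -(ε * (log A - log B)) by
          rw [entropicTransform]; ring, abs_neg, abs_mul, abs_of_pos hε]
    _ ≤ Mc := by
        rw [← mul_div_cancel₀ Mc hε.ne']
        exact mul_le_mul_of_nonneg_left hdiff hε.le

lemma measurable_entropicTransform [SFinite ν] (hcm : Measurable fun p : α × β => c p.1 p.2)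
    (hψ : AEStronglyMeasurable ψ ν) : Measurable (entropicTransform ν c ε ψ) := by
  obtain ⟨ψ₁, hψ₁, hψψ₁⟩ := hψ
  have hT : entropicTransform ν c ε ψ
      = fun x => -ε * log (∫ y, exp ((ψ₁ y - c x y) / ε) ∂ν) := by
    funext x
    have hA : ∫ y, exp ((ψ y - c x y) / ε) ∂ν = ∫ y, exp ((ψ₁ y - c x y) / ε) ∂ν :=
      integral_congr_ae (hψψ₁.mono fun y hy => by simp only [hy])
    rw [entropicTransform, hA]
  rw [hT]
  exact (measurable_log.comp (measurable_exp.comp (((hψ₁.measurable.comp measurable_snd).sub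
    hcm).div_const ε)).stronglyMeasurable.integral_prod_right'.measurable).const_mul _

lemma abs_entropicTransform_le [NeZero ν] (hε : 0 < ε)
    (hcm : Measurable fun p : α × β => c p.1 p.2) (hcb : ∀ x y, |c x y| ≤ Mc)
    (hψ : Integrable (fun y => exp (ψ y / ε)) ν) (x : α) :
    |entropicTransform ν c ε ψ x| ≤ Mc + |ε * log (∫ y, exp (ψ y / ε) ∂ν)| := by
  have h := abs_add_le (entropicTransform ν c ε ψ x + ε * log (∫ y, exp (ψ y / ε) ∂ν))
    (-(ε * log (∫ y, exp (ψ y / ε) ∂ν)))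
  rw [add_neg_cancel_right, abs_neg] at h
  linarith [abs_entropicTransform_add_le hε hcm hcb hψ x]

lemma integrable_entropicTransform [IsFiniteMeasure μ] [SFinite ν] [NeZero ν] (hε : 0 < ε)
    (hcm : Measurable fun p : α × β => c p.1 p.2) (hcb : ∀ x y, |c x y| ≤ Mc)
    (hψm : AEStronglyMeasurable ψ ν) (hψ : Integrable (fun y => exp (ψ y / ε)) ν) :
    Integrable (entropicTransform ν c ε ψ) μ :=
  .of_bound (measurable_entropicTransform hcm hψm).aestronglyMeasurable _
    (Eventually.of_forall fun x =>
      (norm_eq_abs _).trans_le (abs_entropicTransform_le hε hcm hcb hψ x))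

lemma integrable_exp_entropicTransform_add [IsFiniteMeasure μ] [SFinite ν] [NeZero ν]
    (hε : 0 < ε) (hcm : Measurable fun p : α × β => c p.1 p.2) (hcb : ∀ x y, |c x y| ≤ Mc)
    (hψm : AEStronglyMeasurable ψ ν) (hψ : Integrable (fun y => exp (ψ y / ε)) ν) :
    Integrable (fun p : α × β => exp ((entropicTransform ν c ε ψ p.1 + ψ p.2 - c p.1 p.2) / ε))
      (μ.prod ν) := by
  have h₁ : Integrable (fun p : α × β => exp (ψ p.2 / ε)) (μ.prod ν) := by
    simpa only [one_mul] using (integrable_const (1 : ℝ) : Integrable _ μ).mul_prod hψ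
  have h₂ := h₁.exp_add_div_of_le hε.le (g := fun p => -c p.1 p.2) hcm.neg.aemeasurable
    (fun p => neg_le.1 (abs_le.1 (hcb p.1 p.2)).1)
  have hT : Measurable fun p : α × β => entropicTransform ν c ε ψ p.1 :=
    (measurable_entropicTransform hcm hψm).comp measurable_fst
  have h₃ := h₂.exp_add_div_of_le hε.le hT.aemeasurable
    (fun p => (le_abs_self _).trans (abs_entropicTransform_le hε hcm hcb hψ p.1))
  convert h₃ using 3 with p
  ring

lemma integral_exp_entropicTransform_add [IsProbabilityMeasure μ] [SFinite ν] [NeZero ν]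
    (hε : 0 < ε) (hcm : Measurable fun p : α × β => c p.1 p.2) (hcb : ∀ x y, |c x y| ≤ Mc)
    (hψm : AEStronglyMeasurable ψ ν) (hψ : Integrable (fun y => exp (ψ y / ε)) ν) :
    ∫ p, exp ((entropicTransform ν c ε ψ p.1 + ψ p.2 - c p.1 p.2) / ε) ∂(μ.prod ν) = 1 := by
  rw [integral_prod _ (integrable_exp_entropicTransform_add hε hcm hcb hψm hψ)]
  simp only [fun x => integral_exp_add_sub_cost hε.ne' (integrable_exp_sub_cost hε.le hcm hcb hψ x),
    sub_self, zero_div, exp_zero, integral_const, probReal_univ, one_smul]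

lemma dualObj_entropicTransform_sub [IsProbabilityMeasure μ] [SFinite ν] [NeZero ν]
    (hε : 0 < ε) (hcm : Measurable fun p : α × β => c p.1 p.2) (hcb : ∀ x y, |c x y| ≤ Mc)
    (hφ₀ : Integrable φ₀ μ) (hψm : AEStronglyMeasurable ψ ν)
    (hE : Integrable (fun p => exp ((φ₀ p.1 + ψ p.2 - c p.1 p.2) / ε)) (μ.prod ν)) :
    Integrable (fun x => ε * exp ((φ₀ x - entropicTransform ν c ε ψ x) / ε)
        - (φ₀ x - entropicTransform ν c ε ψ x) - ε) μ ∧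
      dualObj μ ν c ε (entropicTransform ν c ε ψ) ψ - dualObj μ ν c ε φ₀ ψ
        = ∫ x, (ε * exp ((φ₀ x - entropicTransform ν c ε ψ x) / ε)
          - (φ₀ x - entropicTransform ν c ε ψ x) - ε) ∂μ := by
  set T := entropicTransform ν c ε ψ
  have hψ := integrable_exp_div_of_integrable_prod hε.le hcm hcb hE
  have hT : Integrable T μ := integrable_entropicTransform hε hcm hcb hψm hψ
  have hinner : ∀ x, ∫ y, exp ((φ₀ x + ψ y - c x y) / ε) ∂ν = exp ((φ₀ x - T x) / ε) :=
    fun x => integral_exp_add_sub_cost hε.ne' (integrable_exp_sub_cost hε.le hcm hcb hψ x) _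
  have hexp : Integrable (fun x => exp ((φ₀ x - T x) / ε)) μ :=
    hE.integral_prod_left.congr (Eventually.of_forall hinner)
  have hsub : Integrable (fun x => φ₀ x - T x) μ := hφ₀.sub hT
  have hgap : Integrable (fun x => ε * exp ((φ₀ x - T x) / ε) - (φ₀ x - T x)) μ :=
    (hexp.const_mul ε).sub hsub
  refine ⟨hgap.sub (integrable_const ε), ?_⟩
  simp only [dualObj]
  rw [integral_exp_entropicTransform_add hε hcm hcb hψm hψ, integral_prod _ hE,
    integral_congr_ae (Eventually.of_forall hinner), integral_sub hgap (integrable_const ε),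
    integral_sub (hexp.const_mul ε) hsub, integral_const_mul, integral_sub hφ₀ hT,
    integral_const, probReal_univ, one_smul]
  ring

lemma dualObj_le_dualObj_entropicTransform [IsProbabilityMeasure μ] [SFinite ν] [NeZero ν]
    (hε : 0 < ε) (hcm : Measurable fun p : α × β => c p.1 p.2) (hcb : ∀ x y, |c x y| ≤ Mc)
    (hφ₀ : Integrable φ₀ μ) (hψm : AEStronglyMeasurable ψ ν)
    (hE : Integrable (fun p => exp ((φ₀ p.1 + ψ p.2 - c p.1 p.2) / ε)) (μ.prod ν)) :
    dualObj μ ν c ε φ₀ ψ ≤ dualObj μ ν c ε (entropicTransform ν c ε ψ) ψ := by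
  have h := (dualObj_entropicTransform_sub hε hcm hcb hφ₀ hψm hE).2
  have hnonneg : 0 ≤ fun x => ε * exp ((φ₀ x - entropicTransform ν c ε ψ x) / ε)
      - (φ₀ x - entropicTransform ν c ε ψ x) - ε :=
    fun x => mul_exp_div_sub_sub_nonneg hε _
  linarith [integral_nonneg (μ := μ) hnonneg]

lemma entropicTransform_ae_eq_of_dualObj_le [IsProbabilityMeasure μ] [SFinite ν] [NeZero ν]
    (hε : 0 < ε) (hcm : Measurable fun p : α × β => c p.1 p.2) (hcb : ∀ x y, |c x y| ≤ Mc)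
    (hφ₀ : Integrable φ₀ μ) (hψm : AEStronglyMeasurable ψ ν)
    (hE : Integrable (fun p => exp ((φ₀ p.1 + ψ p.2 - c p.1 p.2) / ε)) (μ.prod ν))
    (hle : dualObj μ ν c ε (entropicTransform ν c ε ψ) ψ ≤ dualObj μ ν c ε φ₀ ψ) :
    entropicTransform ν c ε ψ =ᵐ[μ] φ₀ := by
  obtain ⟨hint, h⟩ := dualObj_entropicTransform_sub hε hcm hcb hφ₀ hψm hE
  have hnonneg : 0 ≤ fun x => ε * exp ((φ₀ x - entropicTransform ν c ε ψ x) / ε)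
      - (φ₀ x - entropicTransform ν c ε ψ x) - ε :=
    fun x => mul_exp_div_sub_sub_nonneg hε _
  have hzero := le_antisymm (h ▸ sub_nonpos.2 hle) (integral_nonneg hnonneg)
  filter_upwards [(integral_eq_zero_iff_of_nonneg hnonneg hint).1 hzero] with x hx
  exact (sub_eq_zero.1 ((mul_exp_div_sub_sub_eq_zero_iff hε).1 hx)).symm

theorem IsDualMaximizer.entropicTransform_left [IsProbabilityMeasure μ] [SFinite ν] [NeZero ν]
    (h : IsDualMaximizer μ ν c ε φ₀ ψ) (hε : 0 < ε)
    (hcm : Measurable fun p : α × β => c p.1 p.2) (hcb : ∀ x y, |c x y| ≤ Mc) :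
    IsDualMaximizer μ ν c ε (entropicTransform ν c ε ψ) ψ ∧
      entropicTransform ν c ε ψ =ᵐ[μ] φ₀ := by
  obtain ⟨hφ₀, hψ, hmax⟩ := h
  have hE := integrable_exp_of_dualObj_add_one_le hφ₀
    (hmax _ ψ (hφ₀.add (integrable_const 1)) hψ)
  have hT := integrable_entropicTransform (μ := μ) hε hcm hcb hψ.aestronglyMeasurable
    (integrable_exp_div_of_integrable_prod hε.le hcm hcb hE)
  have heq : dualObj μ ν c ε (entropicTransform ν c ε ψ) ψ = dualObj μ ν c ε φ₀ ψ :=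
    le_antisymm (hmax _ ψ hT hψ)
      (dualObj_le_dualObj_entropicTransform hε hcm hcb hφ₀ hψ.aestronglyMeasurable hE)
  exact ⟨⟨hT, hψ, heq ▸ hmax⟩,
    entropicTransform_ae_eq_of_dualObj_le hε hcm hcb hφ₀ hψ.aestronglyMeasurable hE heq.le⟩

end EntropicTransform

theorem stmt_3_general {d : ℕ}
    (μ ν : Measure (EuclideanSpace ℝ (Fin d)))
    [IsProbabilityMeasure μ] [IsProbabilityMeasure ν]
    (c : EuclideanSpace ℝ (Fin d) → EuclideanSpace ℝ (Fin d) → ℝ)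
    (hcm : Measurable fun p : EuclideanSpace ℝ (Fin d) × EuclideanSpace ℝ (Fin d) => c p.1 p.2)
    (Mc : ℝ) (hcb : ∀ x y, |c x y| ≤ Mc)
    (ε : ℝ) (hε : 0 < ε)
    (φ₀ : EuclideanSpace ℝ (Fin d) → ℝ) (ψ₀ : EuclideanSpace ℝ (Fin d) → ℝ)
    (hφ₀ : Integrable φ₀ μ) (hψ₀ : Integrable ψ₀ ν)
    (hmax : ∀ (φ' : EuclideanSpace ℝ (Fin d) → ℝ) (ψ' : EuclideanSpace ℝ (Fin d) → ℝ),
      Integrable φ' μ → Integrable ψ' ν →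
        dualObj μ ν c ε φ' ψ' ≤ dualObj μ ν c ε φ₀ ψ₀)
    (φ ψ : EuclideanSpace ℝ (Fin d) → ℝ)
    (hφdef : ∀ x, φ x = -ε * Real.log (∫ y, Real.exp ((ψ₀ y - c x y) / ε) ∂ν))
    (hψdef : ∀ y, ψ y = -ε * Real.log (∫ x, Real.exp ((φ x - c x y) / ε) ∂μ)) :
    dualObj μ ν c ε φ₀ ψ₀ ≤ dualObj μ ν c ε φ ψ
    ∧ φ =ᵐ[μ] φ₀ ∧ ψ =ᵐ[ν] ψ₀ := by
  have hφT : entropicTransform ν c ε ψ₀ = φ := funext fun x => (hφdef x).symm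
  have hψT : entropicTransform μ (fun y x => c x y) ε φ = ψ := funext fun y => (hψdef y).symm
  obtain ⟨hφmax, hφ⟩ := IsDualMaximizer.entropicTransform_left ⟨hφ₀, hψ₀, hmax⟩ hε hcm hcb
  rw [hφT] at hφmax hφ
  obtain ⟨hψmax, hψ⟩ :=
    hφmax.swap.entropicTransform_left hε (hcm.comp measurable_swap) (fun y x => hcb x y)
  rw [hψT] at hψmax hψ
  exact ⟨hψmax.swap.dualObj_le φ₀ ψ₀ hφ₀ hψ₀, hφ, hψ⟩

/-- If `(φ₀, ψ₀)` maximizes the full EOT dual functional over `L¹(μ) × L¹(ν)`, then the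
smoothed potentials `φ(x) = -ε log ∫ exp((ψ₀(y)-c(x,y))/ε)dν(y)` and `ψ = φ^{c,ε}` are also
maximizers, and `φ = φ₀` μ-a.s., `ψ = ψ₀` ν-a.s. -/
theorem stmt_3 {d : ℕ} (X Y : Set (EuclideanSpace ℝ (Fin d)))
    (hX : IsCompact X) (hY : IsCompact Y)
    (μ ν : Measure (EuclideanSpace ℝ (Fin d)))
    [IsProbabilityMeasure μ] [IsProbabilityMeasure ν]
    (hμX : μ X = 1) (hνY : ν Y = 1)
    (c : EuclideanSpace ℝ (Fin d) → EuclideanSpace ℝ (Fin d) → ℝ)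
    (hcm : Measurable fun p : EuclideanSpace ℝ (Fin d) × EuclideanSpace ℝ (Fin d) => c p.1 p.2)
    (Mc : ℝ) (hcb : ∀ x y, |c x y| ≤ Mc)
    (ε : ℝ) (hε : 0 < ε)
    (φ₀ : EuclideanSpace ℝ (Fin d) → ℝ) (ψ₀ : EuclideanSpace ℝ (Fin d) → ℝ)
    (hφ₀ : Integrable φ₀ μ) (hψ₀ : Integrable ψ₀ ν)
    (hmax : ∀ (φ' : EuclideanSpace ℝ (Fin d) → ℝ) (ψ' : EuclideanSpace ℝ (Fin d) → ℝ),
      Integrable φ' μ → Integrable ψ' ν →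
        dualObj μ ν c ε φ' ψ' ≤ dualObj μ ν c ε φ₀ ψ₀)
    (φ ψ : EuclideanSpace ℝ (Fin d) → ℝ)
    (hφdef : ∀ x, φ x = -ε * Real.log (∫ y, Real.exp ((ψ₀ y - c x y) / ε) ∂ν))
    (hψdef : ∀ y, ψ y = -ε * Real.log (∫ x, Real.exp ((φ x - c x y) / ε) ∂μ)) :
    dualObj μ ν c ε φ₀ ψ₀ ≤ dualObj μ ν c ε φ ψ
    ∧ φ =ᵐ[μ] φ₀ ∧ ψ =ᵐ[ν] ψ₀ :=
  stmt_3_general μ ν c hcm Mc hcb ε hε φ₀ ψ₀ hφ₀ hψ₀ hmax φ ψ hφdef hψdef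
end

section
/- Let μ ∈ 𝒫_ac(𝒳) and ν ∈ 𝒫(𝒴) be probability measures on compact sets, with μ absolutely continuous, c bounded measurable, ε > 0. Let φ⋆ be an optimal semi-dual EOT potential with associated optimal plan π⋆^ε, and for a continuous f : 𝒳 → ℝ define the induced plan dπ_f^ε(x,y) = [exp((f(x)-c(x,y))/ε) / ∫_𝒳 exp((f(x')-c(x',y))/ε) dμ(x')] dμ⊗ν(x,y). Then the semi-dual suboptimality gap equals ε times the KL divergence between plans: Γ(φ⋆) - Γ(f) = ε · D_KL(π⋆^ε ‖ π_f^ε), where Γ(g) = ∫ g dμ + ∫ g^{c,ε} dν. -/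
open MeasureTheory

/-- Kullback–Leibler divergence `∫ log(dπ/dρ) dπ` (real-valued, via the Radon–Nikodym
derivative). -/
noncomputable def klDiv' {α : Type*} [MeasurableSpace α] (π ρ : Measure α) : ℝ :=
  ∫ x, Real.log ((π.rnDeriv ρ x).toReal) ∂π

/-!
Write `g = exp((φ⋆ ⊕ ψ⋆ - c)/ε)` and `h = exp((f - c)/ε) / Z_f(y)` for the densities of `π⋆`
and `π_f` with respect to `μ ⊗ ν`, where `Z_f(y) = ∫ exp((f - c(·, y))/ε) dμ`. The cost cancels
in `ε log (g/h) = (φ⋆ - f)(x) + (ψ⋆ - f^{c,ε})(y)`, so `ε D_KL(π⋆ ‖ π_f) = ∫ ε log(g/h) dπ⋆`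
splits into a function of `x` plus a function of `y`. The Schrödinger system says exactly that
`π⋆` has marginals `μ` and `ν`, so the two terms integrate to `∫ (φ⋆ - f) dμ` and
`∫ (φ⋆^{c,ε} - f^{c,ε}) dν`, whose sum is `Γ(φ⋆) - Γ(f)`.
-/

namespace EntropicOT

noncomputable def partitionFn {α β : Type*} [MeasurableSpace α] (μ : Measure α)
    (c : α → β → ℝ) (ε : ℝ) (u : α → ℝ) (y : β) : ℝ :=
  ∫ x, Real.exp ((u x - c x y) / ε) ∂μ

/-- The soft `c`-transform `u^{c,ε}`. -/
noncomputable def softCTransform {α β : Type*} [MeasurableSpace α] (μ : Measure α)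
    (c : α → β → ℝ) (ε : ℝ) (u : α → ℝ) (y : β) : ℝ :=
  -ε * Real.log (partitionFn μ c ε u y)

/-- The semi-dual objective `Γ`. -/
noncomputable def semiDual {α β : Type*} [MeasurableSpace α] [MeasurableSpace β]
    (μ : Measure α) (ν : Measure β) (c : α → β → ℝ) (ε : ℝ) (u : α → ℝ) : ℝ :=
  ∫ x, u x ∂μ + ∫ y, softCTransform μ c ε u y ∂ν

theorem abs_log_le_of_mem_Icc {t K : ℝ} (ht : t ∈ Set.Icc (Real.exp (-K)) (Real.exp K)) :
    |Real.log t| ≤ K := by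
  rw [abs_le]
  constructor
  · simpa using Real.log_le_log (Real.exp_pos _) ht.1
  · simpa using Real.log_le_log ((Real.exp_pos _).trans_le ht.1) ht.2

theorem abs_sub_div_le {a b M Mc ε : ℝ} (hε : 0 < ε) (ha : |a| ≤ M) (hb : |b| ≤ Mc) :
    |(a - b) / ε| ≤ (M + Mc) / ε := by
  rw [abs_div, abs_of_pos hε]
  gcongr
  exact (abs_sub _ _).trans (add_le_add ha hb)

theorem mul_log_exp_div_exp_div {a b Z ε : ℝ} (hε : ε ≠ 0) (hZ : 0 < Z) :
    ε * Real.log (Real.exp (a / ε) / (Real.exp (b / ε) / Z)) = a - b + ε * Real.log Z := by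
  rw [Real.log_div (Real.exp_pos _).ne' (div_pos (Real.exp_pos _) hZ).ne',
    Real.log_div (Real.exp_pos _).ne' hZ.ne', Real.log_exp, Real.log_exp]
  field_simp
  ring

variable {α β : Type*} [MeasurableSpace α] [MeasurableSpace β]

theorem integrable_exp_of_abs_le {μ : Measure α} [IsFiniteMeasure μ] {w : α → ℝ}
    (hw : Measurable w) {K : ℝ} (hK : ∀ x, |w x| ≤ K) :
    Integrable (fun x => Real.exp (w x)) μ :=
  .of_bound hw.exp.aestronglyMeasurable (Real.exp K) <| ae_of_all _ fun x => by
    simpa using (abs_le.mp (hK x)).2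

theorem integral_exp_mem_Icc {μ : Measure α} [IsProbabilityMeasure μ] {w : α → ℝ}
    (hw : Measurable w) {K : ℝ} (hK : ∀ x, |w x| ≤ K) :
    ∫ x, Real.exp (w x) ∂μ ∈ Set.Icc (Real.exp (-K)) (Real.exp K) := by
  have hint := integrable_exp_of_abs_le (μ := μ) hw hK
  constructor
  · simpa using integral_mono (integrable_const _) hint fun x =>
      Real.exp_le_exp.mpr (neg_le_of_abs_le (hK x))
  · simpa using integral_mono hint (integrable_const _) fun x =>
      Real.exp_le_exp.mpr (le_of_abs_le (hK x))

section SoftCTransform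

variable {μ : Measure α} {c : α → β → ℝ} {ε : ℝ} {u : α → ℝ}

theorem measurable_partitionFn [SFinite μ] (hcm : Measurable fun p : α × β => c p.1 p.2)
    (hu : Measurable u) : Measurable (partitionFn μ c ε u) :=
  (((hu.comp measurable_fst).sub hcm).div_const ε).exp.stronglyMeasurable.integral_prod_left'
    |>.measurable

theorem measurable_softCTransform [SFinite μ] (hcm : Measurable fun p : α × β => c p.1 p.2)
    (hu : Measurable u) : Measurable (softCTransform μ c ε u) :=
  (measurable_partitionFn hcm hu).log.const_mul _

theorem partitionFn_mem_Icc [IsProbabilityMeasure μ] (hε : 0 < ε)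
    (hcm : Measurable fun p : α × β => c p.1 p.2) {Mc : ℝ} (hcb : ∀ x y, |c x y| ≤ Mc)
    (hu : Measurable u) {M : ℝ} (hub : ∀ x, |u x| ≤ M) (y : β) :
    partitionFn μ c ε u y ∈ Set.Icc (Real.exp (-((M + Mc) / ε))) (Real.exp ((M + Mc) / ε)) :=
  integral_exp_mem_Icc ((hu.sub (hcm.comp (measurable_id.prodMk measurable_const))).div_const ε)
    fun x => abs_sub_div_le hε (hub x) (hcb x y)

theorem partitionFn_pos [IsProbabilityMeasure μ] (hε : 0 < ε)
    (hcm : Measurable fun p : α × β => c p.1 p.2) {Mc : ℝ} (hcb : ∀ x y, |c x y| ≤ Mc)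
    (hu : Measurable u) {M : ℝ} (hub : ∀ x, |u x| ≤ M) (y : β) : 0 < partitionFn μ c ε u y :=
  (Real.exp_pos _).trans_le (partitionFn_mem_Icc hε hcm hcb hu hub y).1

theorem abs_softCTransform_le [IsProbabilityMeasure μ] (hε : 0 < ε)
    (hcm : Measurable fun p : α × β => c p.1 p.2) {Mc : ℝ} (hcb : ∀ x y, |c x y| ≤ Mc)
    (hu : Measurable u) {M : ℝ} (hub : ∀ x, |u x| ≤ M) (y : β) :
    |softCTransform μ c ε u y| ≤ M + Mc := by
  rw [softCTransform, abs_mul, abs_neg, abs_of_pos hε, ← le_div_iff₀' hε]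
  exact abs_log_le_of_mem_Icc (partitionFn_mem_Icc hε hcm hcb hu hub y)

end SoftCTransform

theorem semiDual_sub_semiDual {μ : Measure α} {ν : Measure β} [IsProbabilityMeasure μ]
    [IsProbabilityMeasure ν] {c : α → β → ℝ} (hcm : Measurable fun p : α × β => c p.1 p.2)
    {Mc : ℝ} (hcb : ∀ x y, |c x y| ≤ Mc) {ε : ℝ} (hε : 0 < ε) {u w : α → ℝ}
    (hu : Measurable u) {Mu : ℝ} (hub : ∀ x, |u x| ≤ Mu)
    (hw : Measurable w) {Mw : ℝ} (hwb : ∀ x, |w x| ≤ Mw) :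
    semiDual μ ν c ε u - semiDual μ ν c ε w =
      ∫ x, (u x - w x) ∂μ
        + ∫ y, (softCTransform μ c ε u y - softCTransform μ c ε w y) ∂ν := by
  have hu_int : Integrable u μ := .of_bound hu.aestronglyMeasurable Mu (ae_of_all _ hub)
  have hw_int : Integrable w μ := .of_bound hw.aestronglyMeasurable Mw (ae_of_all _ hwb)
  have hu_int' : Integrable (softCTransform μ c ε u) ν :=
    .of_bound (measurable_softCTransform hcm hu).aestronglyMeasurable _
      (ae_of_all _ (abs_softCTransform_le hε hcm hcb hu hub))
  have hw_int' : Integrable (softCTransform μ c ε w) ν :=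
    .of_bound (measurable_softCTransform hcm hw).aestronglyMeasurable _
      (ae_of_all _ (abs_softCTransform_le hε hcm hcb hw hwb))
  rw [semiDual, semiDual, integral_sub hu_int hw_int, integral_sub hu_int' hw_int']
  ring

/-- `g · (μ ⊗ ν)` is a coupling of `μ` and `ν`. -/
theorem integral_mul_add_of_marginals {μ : Measure α} {ν : Measure β} [SFinite μ] [SFinite ν]
    {g : α × β → ℝ} (hg : Integrable g (μ.prod ν))
    (hμ : ∀ᵐ x ∂μ, ∫ y, g (x, y) ∂ν = 1) (hν : ∀ᵐ y ∂ν, ∫ x, g (x, y) ∂μ = 1)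
    {u : α → ℝ} {v : β → ℝ} (hu : Measurable u) (hv : Measurable v) {Mu Mv : ℝ}
    (hub : ∀ x, |u x| ≤ Mu) (hvb : ∀ y, |v y| ≤ Mv) :
    ∫ p, g p * (u p.1 + v p.2) ∂(μ.prod ν) = ∫ x, u x ∂μ + ∫ y, v y ∂ν := by
  have hgu : Integrable (fun p => g p * u p.1) (μ.prod ν) :=
    hg.mul_bdd (hu.comp measurable_fst).aestronglyMeasurable (ae_of_all _ fun p => hub p.1)
  have hgv : Integrable (fun p => g p * v p.2) (μ.prod ν) :=
    hg.mul_bdd (hv.comp measurable_snd).aestronglyMeasurable (ae_of_all _ fun p => hvb p.2)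
  simp_rw [mul_add]
  rw [integral_add hgu hgv, integral_prod _ hgu, integral_prod_symm _ hgv]
  congr 1
  · refine integral_congr_ae ?_
    filter_upwards [hμ] with x hx
    rw [integral_mul_const, hx, one_mul]
  · refine integral_congr_ae ?_
    filter_upwards [hν] with y hy
    rw [integral_mul_const, hy, one_mul]

theorem klDiv'_withDensity_ofReal {ρ : Measure α} [SigmaFinite ρ] {g h : α → ℝ}
    (hg : Measurable g) (hh : Measurable h) (hg0 : ∀ x, 0 ≤ g x) (hh0 : ∀ x, 0 < h x) :
    klDiv' (ρ.withDensity fun x => ENNReal.ofReal (g x))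
        (ρ.withDensity fun x => ENNReal.ofReal (h x))
      = ∫ x, g x * Real.log (g x / h x) ∂ρ := by
  set G : α → ENNReal := fun x => ENNReal.ofReal (g x)
  set H : α → ENNReal := fun x => ENNReal.ofReal (h x)
  have hGH : ρ.withDensity G = (ρ.withDensity H).withDensity (G / H) := by
    rw [← withDensity_mul _ hh.ennreal_ofReal (hg.ennreal_ofReal.div hh.ennreal_ofReal)]
    congr 1
    funext x
    exact (ENNReal.mul_div_cancel (by simpa [H] using hh0 x) ENNReal.ofReal_ne_top).symm
  have hrn : (ρ.withDensity G).rnDeriv (ρ.withDensity H) =ᵐ[ρ.withDensity G] G / H := by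
    rw [hGH]
    exact (withDensity_absolutelyContinuous _ _).ae_le
      (Measure.rnDeriv_withDensity _ (hg.ennreal_ofReal.div hh.ennreal_ofReal))
  rw [klDiv', integral_congr_ae (hrn.mono fun x hx => by rw [hx]),
    integral_withDensity_eq_integral_toReal_smul hg.ennreal_ofReal
      (ae_of_all _ fun _ => ENNReal.ofReal_lt_top)]
  refine integral_congr_ae (ae_of_all _ fun x => ?_)
  simp [G, H, ENNReal.toReal_div, ENNReal.toReal_ofReal (hg0 x), (hh0 x).le]

theorem semiDual_sub_semiDual_eq_mul_klDiv' {μ : Measure α} {ν : Measure β}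
    [IsProbabilityMeasure μ] [IsProbabilityMeasure ν] {c : α → β → ℝ}
    (hcm : Measurable fun p : α × β => c p.1 p.2) {Mc : ℝ} (hcb : ∀ x y, |c x y| ≤ Mc)
    {ε : ℝ} (hε : 0 < ε) {φ : α → ℝ} (hφ : Measurable φ) {Mφ : ℝ} (hφb : ∀ x, |φ x| ≤ Mφ)
    {ψ : β → ℝ} (hψ : ψ = softCTransform μ c ε φ)
    (hS1 : ∀ᵐ y ∂ν, ∫ x, Real.exp ((φ x + ψ y - c x y) / ε) ∂μ = 1)
    (hS2 : ∀ᵐ x ∂μ, ∫ y, Real.exp ((φ x + ψ y - c x y) / ε) ∂ν = 1)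
    {f : α → ℝ} (hf : Measurable f) {Mf : ℝ} (hfb : ∀ x, |f x| ≤ Mf) :
    semiDual μ ν c ε φ - semiDual μ ν c ε f
      = ε * klDiv'
        ((μ.prod ν).withDensity fun p =>
          ENNReal.ofReal (Real.exp ((φ p.1 + ψ p.2 - c p.1 p.2) / ε)))
        ((μ.prod ν).withDensity fun p =>
          ENNReal.ofReal (Real.exp ((f p.1 - c p.1 p.2) / ε) / partitionFn μ c ε f p.2)) := by
  have hψm : Measurable ψ := hψ ▸ measurable_softCTransform hcm hφ
  have hψb : ∀ y, |ψ y| ≤ Mφ + Mc := hψ ▸ abs_softCTransform_le hε hcm hcb hφ hφb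
  have hZ_pos := partitionFn_pos (μ := μ) hε hcm hcb hf hfb
  have hZm : Measurable fun p : α × β => partitionFn μ c ε f p.2 :=
    (measurable_partitionFn hcm hf).comp measurable_snd
  have hgm : Measurable fun p : α × β => Real.exp ((φ p.1 + ψ p.2 - c p.1 p.2) / ε) := by
    fun_prop
  have hhm : Measurable fun p : α × β =>
      Real.exp ((f p.1 - c p.1 p.2) / ε) / partitionFn μ c ε f p.2 := by
    fun_prop
  have hg_int := integrable_exp_of_abs_le (μ := μ.prod ν)
    (w := fun p : α × β => (φ p.1 + ψ p.2 - c p.1 p.2) / ε) (by fun_prop) fun p =>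
    abs_sub_div_le hε ((abs_add_le _ _).trans (add_le_add (hφb p.1) (hψb p.2))) (hcb p.1 p.2)
  rw [klDiv'_withDensity_ofReal hgm hhm (fun _ => (Real.exp_pos _).le)
      fun p => div_pos (Real.exp_pos _) (hZ_pos p.2), ← integral_const_mul,
    semiDual_sub_semiDual hcm hcb hε hφ hφb hf hfb, ← hψ,
    ← integral_mul_add_of_marginals (u := fun x => φ x - f x)
      (v := fun y => ψ y - softCTransform μ c ε f y) hg_int hS2 hS1 (hφ.sub hf)
      (hψm.sub (measurable_softCTransform hcm hf))
      (fun x => (abs_sub _ _).trans (add_le_add (hφb x) (hfb x)))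
      (fun y => (abs_sub _ _).trans
        (add_le_add (hψb y) (abs_softCTransform_le hε hcm hcb hf hfb y)))]
  refine integral_congr_ae (ae_of_all _ fun p => ?_)
  dsimp only
  rw [mul_left_comm, mul_log_exp_div_exp_div hε.ne' (hZ_pos p.2), softCTransform]
  ring

end EntropicOT

theorem stmt_5_general {d : ℕ}
    (μ ν : Measure (EuclideanSpace ℝ (Fin d)))
    [IsProbabilityMeasure μ] [IsProbabilityMeasure ν]
    (c : EuclideanSpace ℝ (Fin d) → EuclideanSpace ℝ (Fin d) → ℝ)
    (hcm : Measurable fun p : EuclideanSpace ℝ (Fin d) × EuclideanSpace ℝ (Fin d) => c p.1 p.2)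
    (Mc : ℝ) (hcb : ∀ x y, |c x y| ≤ Mc)
    (ε : ℝ) (hε : 0 < ε)
    -- `φ⋆` is an optimal semi-dual potential: together with `ψ⋆ = φ⋆^{c,ε}` it solves the
    -- Schrödinger system, so the associated optimal plan is `π⋆`.
    (φs ψs : EuclideanSpace ℝ (Fin d) → ℝ)
    (hφsm : Measurable φs) (Mφ : ℝ) (hφsb : ∀ x, |φs x| ≤ Mφ)
    (hψsdef : ∀ y, ψs y = -ε * Real.log (∫ x, Real.exp ((φs x - c x y) / ε) ∂μ))
    (hS1 : ∀ᵐ y ∂ν, ∫ x, Real.exp ((φs x + ψs y - c x y) / ε) ∂μ = 1)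
    (hS2 : ∀ᵐ x ∂μ, ∫ y, Real.exp ((φs x + ψs y - c x y) / ε) ∂ν = 1)
    (f : EuclideanSpace ℝ (Fin d) → ℝ) (hf : Continuous f)
    (Mf : ℝ) (hfb : ∀ x, |f x| ≤ Mf) :
    (∫ x, φs x ∂μ
        + ∫ y, (-ε * Real.log (∫ x, Real.exp ((φs x - c x y) / ε) ∂μ)) ∂ν)
      - (∫ x, f x ∂μ
        + ∫ y, (-ε * Real.log (∫ x, Real.exp ((f x - c x y) / ε) ∂μ)) ∂ν)
    = ε * klDiv'
        ((μ.prod ν).withDensity fun p =>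
          ENNReal.ofReal (Real.exp ((φs p.1 + ψs p.2 - c p.1 p.2) / ε)))
        ((μ.prod ν).withDensity fun p =>
          ENNReal.ofReal (Real.exp ((f p.1 - c p.1 p.2) / ε)
            / ∫ x, Real.exp ((f x - c x p.2) / ε) ∂μ)) := by
  exact EntropicOT.semiDual_sub_semiDual_eq_mul_klDiv' hcm hcb hε hφsm hφsb (funext hψsdef)
    hS1 hS2 hf.measurable hfb

/-- Semi-dual suboptimality gap equals `ε` times the KL divergence between the optimal
EOT plan and the plan induced by `f`: `Γ(φ⋆) - Γ(f) = ε D_KL(π⋆^ε ‖ π_f^ε)`. -/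
theorem stmt_5 {d : ℕ} (X Y : Set (EuclideanSpace ℝ (Fin d)))
    (hX : IsCompact X) (hY : IsCompact Y)
    (μ ν : Measure (EuclideanSpace ℝ (Fin d)))
    [IsProbabilityMeasure μ] [IsProbabilityMeasure ν]
    (hμX : μ X = 1) (hνY : ν Y = 1) (hac : μ ≪ volume)
    (c : EuclideanSpace ℝ (Fin d) → EuclideanSpace ℝ (Fin d) → ℝ)
    (hcm : Measurable fun p : EuclideanSpace ℝ (Fin d) × EuclideanSpace ℝ (Fin d) => c p.1 p.2)
    (Mc : ℝ) (hcb : ∀ x y, |c x y| ≤ Mc)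
    (ε : ℝ) (hε : 0 < ε)
    -- `φ⋆` is an optimal semi-dual potential: together with `ψ⋆ = φ⋆^{c,ε}` it solves the
    -- Schrödinger system, so the associated optimal plan is `π⋆`.
    (φs ψs : EuclideanSpace ℝ (Fin d) → ℝ)
    (hφsm : Measurable φs) (Mφ : ℝ) (hφsb : ∀ x, |φs x| ≤ Mφ)
    (hψsdef : ∀ y, ψs y = -ε * Real.log (∫ x, Real.exp ((φs x - c x y) / ε) ∂μ))
    (hS1 : ∀ᵐ y ∂ν, ∫ x, Real.exp ((φs x + ψs y - c x y) / ε) ∂μ = 1)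
    (hS2 : ∀ᵐ x ∂μ, ∫ y, Real.exp ((φs x + ψs y - c x y) / ε) ∂ν = 1)
    (f : EuclideanSpace ℝ (Fin d) → ℝ) (hf : Continuous f)
    (Mf : ℝ) (hfb : ∀ x, |f x| ≤ Mf) :
    (∫ x, φs x ∂μ
        + ∫ y, (-ε * Real.log (∫ x, Real.exp ((φs x - c x y) / ε) ∂μ)) ∂ν)
      - (∫ x, f x ∂μ
        + ∫ y, (-ε * Real.log (∫ x, Real.exp ((f x - c x y) / ε) ∂μ)) ∂ν)
    = ε * klDiv'
        ((μ.prod ν).withDensity fun p =>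
          ENNReal.ofReal (Real.exp ((φs p.1 + ψs p.2 - c p.1 p.2) / ε)))
        ((μ.prod ν).withDensity fun p =>
          ENNReal.ofReal (Real.exp ((f p.1 - c p.1 p.2) / ε)
            / ∫ x, Real.exp ((f x - c x p.2) / ε) ∂μ)) :=
  stmt_5_general μ ν c hcm Mc hcb ε hε φs ψs hφsm Mφ hφsb hψsdef hS1 hS2 f hf Mf hfb
end

section
/- Let 𝒳, 𝒴 be compact, μ, ν probability measures, c bounded measurable, ε > 0, and let ℱ be any class of continuous functions f : 𝒳 → ℝ that are uniformly bounded. Define OT_ℱ^ε(μ,ν) = sup_{f∈ℱ} ∫f dμ + ∫f^{c,ε} dν. Then OT_ℱ^ε(μ,ν) ≤ OT^ε(μ,ν), and if φ is an optimal semi-dual potential for OT^ε(μ,ν) then for any f ∈ ℱ: |OT^ε(μ,ν) - OT_ℱ^ε(μ,ν)| ≤ 2 sup_{x∈𝒳}|φ(x) - f(x)|. -/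
open MeasureTheory

/-- The semi-dual EOT objective `S(g) = ∫ g dμ + ∫ g^{c,ε} dν`. -/
noncomputable def semiDualObj {d : ℕ}
    (μ ν : Measure (EuclideanSpace ℝ (Fin d)))
    (c : EuclideanSpace ℝ (Fin d) → EuclideanSpace ℝ (Fin d) → ℝ) (ε : ℝ)
    (g : EuclideanSpace ℝ (Fin d) → ℝ) : ℝ :=
  ∫ x, g x ∂μ + ∫ y, (-ε * Real.log (∫ x, Real.exp ((g x - c x y) / ε) ∂μ)) ∂ν

/-!
The entropic `(c, ε)`-transform is `1`-Lipschitz for the (essential) sup-norm, because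
`log ∫ exp` is monotone and commutes with adding constants. Hence the semi-dual objective
`S(g) = ∫ g dμ + ∫ g^{c,ε} dν` is `2`-Lipschitz, so
`OT^ε = S(φ⋆) ≤ S(f) + 2‖φ⋆ - f‖_{∞,𝒳}` for every `f ∈ ℱ` (as `μ(𝒳) = 1`), while `S(f) ≤ OT^ε`
by optimality of `φ⋆`.
-/

section LogIntegralExp

variable {α : Type*} [MeasurableSpace α] {μ : Measure α}

theorem integrable_exp_of_ae_le [IsFiniteMeasure μ] {f : α → ℝ}
    (hf : AEStronglyMeasurable f μ) {M : ℝ} (hfM : ∀ᵐ x ∂μ, f x ≤ M) :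
    Integrable (fun x => Real.exp (f x)) μ :=
  .of_bound (Real.continuous_exp.comp_aestronglyMeasurable hf) (Real.exp M)
    (hfM.mono fun x hx => by
      rw [Real.norm_of_nonneg (Real.exp_pos _).le]
      exact Real.exp_le_exp.2 hx)

theorem log_integral_exp_le_add [NeZero μ] {f g : α → ℝ} {t : ℝ}
    (hf : Integrable (fun x => Real.exp (f x)) μ) (hg : Integrable (fun x => Real.exp (g x)) μ)
    (hfg : ∀ᵐ x ∂μ, f x ≤ g x + t) :
    Real.log (∫ x, Real.exp (f x) ∂μ) ≤ Real.log (∫ x, Real.exp (g x) ∂μ) + t := by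
  have hmono : ∫ x, Real.exp (f x) ∂μ ≤ Real.exp t * ∫ x, Real.exp (g x) ∂μ := by
    rw [← integral_const_mul]
    refine integral_mono_ae hf (hg.const_mul _) (hfg.mono fun x hx => ?_)
    exact (Real.exp_le_exp.2 (by linarith : f x ≤ t + g x)).trans_eq (Real.exp_add t (g x))
  calc Real.log (∫ x, Real.exp (f x) ∂μ)
      ≤ Real.log (Real.exp t * ∫ x, Real.exp (g x) ∂μ) :=
        Real.log_le_log (integral_exp_pos hf) hmono
    _ = Real.log (∫ x, Real.exp (g x) ∂μ) + t := by
        rw [Real.log_mul (Real.exp_pos t).ne' (integral_exp_pos hg).ne', Real.log_exp, add_comm]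

theorem abs_log_integral_exp_le [IsProbabilityMeasure μ] {f : α → ℝ} {M : ℝ}
    (hf : Integrable (fun x => Real.exp (f x)) μ) (hfM : ∀ᵐ x ∂μ, |f x| ≤ M) :
    |Real.log (∫ x, Real.exp (f x) ∂μ)| ≤ M := by
  have hone : Integrable (fun _ : α => Real.exp 0) μ := integrable_const _
  have hlog_one : Real.log (∫ _ : α, Real.exp 0 ∂μ) = 0 := by simp
  have hlower := log_integral_exp_le_add (g := f) hone hf
    (hfM.mono fun x hx => by linarith [(abs_le.1 hx).1])
  have hupper := log_integral_exp_le_add (g := fun _ => 0) hf hone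
    (hfM.mono fun x hx => by linarith [(abs_le.1 hx).2])
  rw [abs_le]
  constructor <;> linarith

theorem integral_le_integral_add_of_ae_le [IsProbabilityMeasure μ] {f g : α → ℝ} {t : ℝ}
    (hf : Integrable f μ) (hg : Integrable g μ) (hfg : ∀ᵐ x ∂μ, f x ≤ g x + t) :
    ∫ x, f x ∂μ ≤ ∫ x, g x ∂μ + t := by
  have : ∫ x, f x ∂μ ≤ ∫ x, (g x + t) ∂μ :=
    integral_mono_ae hf (hg.add (integrable_const t)) hfg
  rwa [integral_add hg (integrable_const t), integral_const, probReal_univ, one_smul] at this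

end LogIntegralExp

section EntropicCTransform

variable {α β : Type*} [MeasurableSpace α] {μ : Measure α}
  {c : α → β → ℝ} {ε : ℝ}

variable (μ c ε) in
noncomputable def entropicCTransform (g : α → ℝ) (y : β) : ℝ :=
  -ε * Real.log (∫ x, Real.exp ((g x - c x y) / ε) ∂μ)

theorem entropicCTransform_le_add [NeZero μ] (hε : 0 < ε) {g h : α → ℝ} {y : β}
    (hg : Integrable (fun x => Real.exp ((g x - c x y) / ε)) μ)
    (hh : Integrable (fun x => Real.exp ((h x - c x y) / ε)) μ) {t : ℝ}
    (hhg : ∀ᵐ x ∂μ, h x ≤ g x + t) :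
    entropicCTransform μ c ε g y ≤ entropicCTransform μ c ε h y + t := by
  have hlog := log_integral_exp_le_add (t := t / ε) hh hg (hhg.mono fun x hx => by
    rw [← add_div]
    exact div_le_div_of_nonneg_right (by linarith) hε.le)
  have hscaled := mul_le_mul_of_nonneg_left hlog hε.le
  rw [mul_add, mul_div_cancel₀ t hε.ne'] at hscaled
  simp only [entropicCTransform]
  linarith

variable [MeasurableSpace β]

theorem integrable_exp_sub_div [IsFiniteMeasure μ] (hc : Measurable fun p : α × β => c p.1 p.2)
    (hε : 0 < ε) {g : α → ℝ} (hg : AEStronglyMeasurable g μ) {M : ℝ}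
    (hM : ∀ x y, |g x - c x y| ≤ M) (y : β) :
    Integrable (fun x => Real.exp ((g x - c x y) / ε)) μ :=
  integrable_exp_of_ae_le
    ((hg.sub (hc.comp measurable_prodMk_right).aestronglyMeasurable).aemeasurable.div_const
      ε).aestronglyMeasurable
    (ae_of_all _ fun x => div_le_div_of_nonneg_right (abs_le.1 (hM x y)).2 hε.le)

theorem abs_entropicCTransform_le [IsProbabilityMeasure μ]
    (hc : Measurable fun p : α × β => c p.1 p.2) (hε : 0 < ε) {g : α → ℝ}
    (hg : AEStronglyMeasurable g μ) {M : ℝ} (hM : ∀ x y, |g x - c x y| ≤ M) (y : β) :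
    |entropicCTransform μ c ε g y| ≤ M := by
  have hlog := abs_log_integral_exp_le (M := M / ε) (integrable_exp_sub_div hc hε hg hM y)
    (ae_of_all _ fun x => by
      rw [abs_div, abs_of_pos hε]
      exact div_le_div_of_nonneg_right (hM x y) hε.le)
  rw [entropicCTransform, abs_mul, abs_neg, abs_of_pos hε]
  calc ε * |Real.log (∫ x, Real.exp ((g x - c x y) / ε) ∂μ)| ≤ ε * (M / ε) :=
        mul_le_mul_of_nonneg_left hlog hε.le
    _ = M := mul_div_cancel₀ M hε.ne'

theorem aestronglyMeasurable_entropicCTransform [SFinite μ] {ν : Measure β} [SFinite ν]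
    (hc : Measurable fun p : α × β => c p.1 p.2) {g : α → ℝ} (hg : AEStronglyMeasurable g μ) :
    AEStronglyMeasurable (entropicCTransform μ c ε g) ν := by
  have hexp : AEStronglyMeasurable (fun p : β × α => Real.exp ((g p.2 - c p.2 p.1) / ε))
      (ν.prod μ) :=
    Real.continuous_exp.comp_aestronglyMeasurable
      ((hg.comp_snd.sub (hc.comp measurable_swap).aestronglyMeasurable).aemeasurable.div_const
        ε).aestronglyMeasurable
  exact ((Real.measurable_log.comp_aemeasurable hexp.integral_prod_right'.aemeasurable).const_mul
    (-ε)).aestronglyMeasurable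

theorem integrable_entropicCTransform [IsProbabilityMeasure μ] {ν : Measure β}
    [IsFiniteMeasure ν] (hc : Measurable fun p : α × β => c p.1 p.2) (hε : 0 < ε) {g : α → ℝ}
    (hg : AEStronglyMeasurable g μ) {M : ℝ} (hM : ∀ x y, |g x - c x y| ≤ M) :
    Integrable (entropicCTransform μ c ε g) ν :=
  .of_bound (aestronglyMeasurable_entropicCTransform hc hg) M
    (ae_of_all _ fun y => abs_entropicCTransform_le hc hε hg hM y)

end EntropicCTransform

theorem semiDualObj_le_add_two_mul {d : ℕ} {μ ν : Measure (EuclideanSpace ℝ (Fin d))}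
    [IsProbabilityMeasure μ] [IsProbabilityMeasure ν]
    {c : EuclideanSpace ℝ (Fin d) → EuclideanSpace ℝ (Fin d) → ℝ}
    (hc : Measurable fun p : EuclideanSpace ℝ (Fin d) × EuclideanSpace ℝ (Fin d) => c p.1 p.2)
    {ε : ℝ} (hε : 0 < ε) {g h : EuclideanSpace ℝ (Fin d) → ℝ} (hg : Integrable g μ)
    (hh : Integrable h μ) {Mg Mh : ℝ} (hgM : ∀ x y, |g x - c x y| ≤ Mg)
    (hhM : ∀ x y, |h x - c x y| ≤ Mh) {t : ℝ} (hgh : ∀ᵐ x ∂μ, |g x - h x| ≤ t) :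
    semiDualObj μ ν c ε g ≤ semiDualObj μ ν c ε h + 2 * t := by
  have hμ : ∫ x, g x ∂μ ≤ ∫ x, h x ∂μ + t :=
    integral_le_integral_add_of_ae_le hg hh (hgh.mono fun x hx => by linarith [(abs_le.1 hx).2])
  have hν : ∫ y, entropicCTransform μ c ε g y ∂ν ≤ ∫ y, entropicCTransform μ c ε h y ∂ν + t :=
    integral_le_integral_add_of_ae_le (integrable_entropicCTransform hc hε hg.1 hgM)
      (integrable_entropicCTransform hc hε hh.1 hhM) (ae_of_all _ fun y =>
        entropicCTransform_le_add hε (integrable_exp_sub_div hc hε hg.1 hgM y)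
          (integrable_exp_sub_div hc hε hh.1 hhM y)
          (hgh.mono fun x hx => by linarith [(abs_le.1 hx).1]))
  change ∫ x, g x ∂μ + ∫ y, entropicCTransform μ c ε g y ∂ν
    ≤ ∫ x, h x ∂μ + ∫ y, entropicCTransform μ c ε h y ∂ν + 2 * t
  linarith

theorem stmt_7_general {d : ℕ} (X : Set (EuclideanSpace ℝ (Fin d)))
    (hX : IsCompact X)
    (μ ν : Measure (EuclideanSpace ℝ (Fin d)))
    [IsProbabilityMeasure μ] [IsProbabilityMeasure ν]
    (hμX : μ X = 1)
    (c : EuclideanSpace ℝ (Fin d) → EuclideanSpace ℝ (Fin d) → ℝ)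
    (hcm : Measurable fun p : EuclideanSpace ℝ (Fin d) × EuclideanSpace ℝ (Fin d) => c p.1 p.2)
    (Mc : ℝ) (hcb : ∀ x y, |c x y| ≤ Mc)
    (ε : ℝ) (hε : 0 < ε)
    (F : Set (EuclideanSpace ℝ (Fin d) → ℝ)) (hFne : F.Nonempty)
    (hFcont : ∀ f ∈ F, Continuous f)
    (B : ℝ) (hFb : ∀ f ∈ F, ∀ x, |f x| ≤ B)
    -- `φ⋆` is an optimal semi-dual potential achieving the value `OT^ε(μ,ν)`:
    (φs : EuclideanSpace ℝ (Fin d) → ℝ) (hφsint : Integrable φs μ)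
    (Mφ : ℝ) (hφsb : ∀ x, |φs x| ≤ Mφ)
    (OTval : ℝ)
    (hopt : semiDualObj μ ν c ε φs = OTval)
    (hub : ∀ φ' : EuclideanSpace ℝ (Fin d) → ℝ, Integrable φ' μ →
      semiDualObj μ ν c ε φ' ≤ OTval) :
    sSup (semiDualObj μ ν c ε '' F) ≤ OTval
    ∧ ∀ f ∈ F, |OTval - sSup (semiDualObj μ ν c ε '' F)|
        ≤ 2 * ⨆ x : X, |φs x - f x| := by
  have hFint : ∀ f ∈ F, Integrable f μ := fun f hf =>
    .of_bound (hFcont f hf).aestronglyMeasurable B (ae_of_all _ (hFb f hf))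
  have hFle : ∀ f ∈ F, semiDualObj μ ν c ε f ≤ OTval := fun f hf => hub f (hFint f hf)
  have hsup : sSup (semiDualObj μ ν c ε '' F) ≤ OTval :=
    csSup_le (hFne.image _) (Set.forall_mem_image.2 hFle)
  refine ⟨hsup, fun f hf => ?_⟩
  have hXae : ∀ᵐ x ∂μ, x ∈ X :=
    (ae_mem_iff_measure_eq hX.isClosed.measurableSet.nullMeasurableSet).2
      (by rw [hμX, measure_univ])
  have hdist : ∀ᵐ x ∂μ, |φs x - f x| ≤ ⨆ x : X, |φs x - f x| := by
    have hbdd : BddAbove (Set.range fun x : X => |φs x - f x|) :=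
      ⟨Mφ + B, Set.forall_mem_range.2 fun x =>
        (abs_sub _ _).trans (add_le_add (hφsb x) (hFb f hf x))⟩
    filter_upwards [hXae] with x hx using le_ciSup hbdd ⟨x, hx⟩
  have hcompare := semiDualObj_le_add_two_mul (ν := ν) hcm hε hφsint (hFint f hf)
    (fun x y => (abs_sub _ _).trans (add_le_add (hφsb x) (hcb x y)))
    (fun x y => (abs_sub _ _).trans (add_le_add (hFb f hf x) (hcb x y))) hdist
  have hfsup : semiDualObj μ ν c ε f ≤ sSup (semiDualObj μ ν c ε '' F) :=
    le_csSup ⟨OTval, Set.forall_mem_image.2 hFle⟩ (Set.mem_image_of_mem _ hf)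
  rw [abs_of_nonneg (sub_nonneg.2 hsup)]
  linarith

/-- For any uniformly bounded class `ℱ` of continuous functions,
`OT_ℱ^ε(μ,ν) ≤ OT^ε(μ,ν)`, and if `φ⋆` is an optimal semi-dual potential then for every
`f ∈ ℱ`: `|OT^ε(μ,ν) - OT_ℱ^ε(μ,ν)| ≤ 2 sup_{x∈𝒳} |φ⋆(x) - f(x)|`. -/
theorem stmt_7 {d : ℕ} (X Y : Set (EuclideanSpace ℝ (Fin d)))
    (hX : IsCompact X) (hY : IsCompact Y) (hXne : X.Nonempty)
    (μ ν : Measure (EuclideanSpace ℝ (Fin d)))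
    [IsProbabilityMeasure μ] [IsProbabilityMeasure ν]
    (hμX : μ X = 1) (hνY : ν Y = 1)
    (c : EuclideanSpace ℝ (Fin d) → EuclideanSpace ℝ (Fin d) → ℝ)
    (hcm : Measurable fun p : EuclideanSpace ℝ (Fin d) × EuclideanSpace ℝ (Fin d) => c p.1 p.2)
    (Mc : ℝ) (hcb : ∀ x y, |c x y| ≤ Mc)
    (ε : ℝ) (hε : 0 < ε)
    (F : Set (EuclideanSpace ℝ (Fin d) → ℝ)) (hFne : F.Nonempty)
    (hFcont : ∀ f ∈ F, Continuous f)
    (B : ℝ) (hFb : ∀ f ∈ F, ∀ x, |f x| ≤ B)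
    -- `φ⋆` is an optimal semi-dual potential achieving the value `OT^ε(μ,ν)`:
    (φs : EuclideanSpace ℝ (Fin d) → ℝ) (hφsint : Integrable φs μ)
    (Mφ : ℝ) (hφsb : ∀ x, |φs x| ≤ Mφ)
    (OTval : ℝ)
    (hopt : semiDualObj μ ν c ε φs = OTval)
    (hub : ∀ φ' : EuclideanSpace ℝ (Fin d) → ℝ, Integrable φ' μ →
      semiDualObj μ ν c ε φ' ≤ OTval) :
    sSup (semiDualObj μ ν c ε '' F) ≤ OTval
    ∧ ∀ f ∈ F, |OTval - sSup (semiDualObj μ ν c ε '' F)|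
        ≤ 2 * ⨆ x : X, |φs x - f x| :=
  stmt_7_general X hX μ ν hμX c hcm Mc hcb ε hε F hFne hFcont B hFb φs hφsint Mφ hφsb OTval hopt hub
end

section
/- Let μ be a probability measure on 𝒳, c bounded measurable, ε > 0, and let (φ, ψ) be bounded measurable with ψ arbitrary. Then for every y, ψ(y) - ε ∫ exp((φ(x)+ψ(y)-c(x,y))/ε) dμ(x) + ε ≤ φ^{c,ε}(y), with equality iff ψ(y) = φ^{c,ε}(y). Consequently the full-dual objective with fixed φ is maximized over ψ by choosing ψ = φ^{c,ε}, which proves that the full dual supremum over pairs (φ,ψ) equals the semi-dual supremum over φ alone. -/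
open MeasureTheory

lemma integrable_of_bdd {α : Type*} [MeasurableSpace α] (μ : Measure α) [IsFiniteMeasure μ]
    {f : α → ℝ} (hm : Measurable f) (C : ℝ) (h : ∀ x, |f x| ≤ C) : Integrable f μ :=
  ⟨hm.aestronglyMeasurable, HasFiniteIntegral.of_bounded (C := C)
    (ae_of_all _ (by simpa [Real.norm_eq_abs] using h))⟩

/-- Pointwise domination of the full dual by the `(c,ε)`-transform: for every `y`,
`ψ(y) - ε ∫ exp((φ(x)+ψ(y)-c(x,y))/ε) dμ(x) + ε ≤ φ^{c,ε}(y)`, with equality iff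
`ψ(y) = φ^{c,ε}(y)`. Consequently the full-dual objective with fixed `φ` is maximized by
`ψ = φ^{c,ε}`, i.e. `D(φ,ψ) ≤ S(φ)` with equality at `ψ = φ^{c,ε}`. -/
theorem stmt_14 {α β : Type*} [MeasurableSpace α] [MeasurableSpace β]
    (μ : Measure α) [IsProbabilityMeasure μ]
    (ν : Measure β) [IsProbabilityMeasure ν]
    (c : α → β → ℝ)
    (hcm : Measurable fun p : α × β => c p.1 p.2)
    (Mc : ℝ) (hcb : ∀ x y, |c x y| ≤ Mc)
    (ε : ℝ) (hε : 0 < ε)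
    (φ : α → ℝ) (hφm : Measurable φ) (Mφ : ℝ) (hφb : ∀ x, |φ x| ≤ Mφ)
    (ψ : β → ℝ) (hψm : Measurable ψ) (Mψ : ℝ) (hψb : ∀ y, |ψ y| ≤ Mψ)
    (T : β → ℝ)
    (hT : ∀ y, T y = -ε * Real.log (∫ x, Real.exp ((φ x - c x y) / ε) ∂μ)) :
    (∀ y, ψ y - ε * ∫ x, Real.exp ((φ x + ψ y - c x y) / ε) ∂μ + ε ≤ T y
      ∧ (ψ y - ε * ∫ x, Real.exp ((φ x + ψ y - c x y) / ε) ∂μ + ε = T y ↔ ψ y = T y))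
    ∧ (∫ x, φ x ∂μ + ∫ y, ψ y ∂ν
        - ε * ∫ p, Real.exp ((φ p.1 + ψ p.2 - c p.1 p.2) / ε) ∂(μ.prod ν) + ε
      ≤ ∫ x, φ x ∂μ + ∫ y, T y ∂ν)
    ∧ (∫ x, φ x ∂μ + ∫ y, T y ∂ν
        - ε * ∫ p, Real.exp ((φ p.1 + T p.2 - c p.1 p.2) / ε) ∂(μ.prod ν) + ε
      = ∫ x, φ x ∂μ + ∫ y, T y ∂ν) := by
  set K : ℝ := Mφ + Mc with hK
  set I : β → ℝ := fun y => ∫ x, Real.exp ((φ x - c x y) / ε) ∂μ with hI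
  -- basic bounds on the inner integrand
  have hbdd : ∀ x y, Real.exp ((φ x - c x y) / ε) ∈
      Set.Icc (Real.exp (-K / ε)) (Real.exp (K / ε)) := by
    intro x y
    have h1 := abs_le.1 (hφb x)
    have h2 := abs_le.1 (hcb x y)
    constructor <;> apply Real.exp_le_exp.2
    · apply div_le_div_of_nonneg_right (by simp [hK]; linarith [h1.1, h2.2]) hε.le
    · apply div_le_div_of_nonneg_right (by simp [hK]; linarith [h1.2, h2.1]) hε.le
  have hmeas2 : Measurable (fun p : α × β => Real.exp ((φ p.1 - c p.1 p.2) / ε)) :=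
    (((hφm.comp measurable_fst).sub hcm).div_const ε).exp
  have hcmy : ∀ y, Measurable fun x => c x y := fun y =>
    hcm.comp (measurable_id.prodMk measurable_const)
  have hint1 : ∀ y, Integrable (fun x => Real.exp ((φ x - c x y) / ε)) μ := by
    intro y
    refine integrable_of_bdd μ (((hφm.sub (hcmy y)).div_const ε).exp) (Real.exp (K / ε)) ?_
    intro x
    have := hbdd x y
    rw [abs_of_nonneg (Real.exp_pos _).le]
    exact this.2
  have hIlb : ∀ y, Real.exp (-K / ε) ≤ I y := by
    intro y
    calc Real.exp (-K / ε) = ∫ _ : α, Real.exp (-K / ε) ∂μ := by simp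
    _ ≤ I y := integral_mono (integrable_const _) (hint1 y) (fun x => (hbdd x y).1)
  have hIub : ∀ y, I y ≤ Real.exp (K / ε) := by
    intro y
    calc I y ≤ ∫ _ : α, Real.exp (K / ε) ∂μ :=
      integral_mono (hint1 y) (integrable_const _) (fun x => (hbdd x y).2)
    _ = Real.exp (K / ε) := by simp
  have hIpos : ∀ y, 0 < I y := fun y => lt_of_lt_of_le (Real.exp_pos _) (hIlb y)
  -- I y = exp (-T y / ε)
  have hIT : ∀ y, I y = Real.exp (-T y / ε) := by
    intro y
    rw [hT y]
    rw [show -(-ε * Real.log (I y)) / ε = Real.log (I y) by field_simp]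
    exact (Real.exp_log (hIpos y)).symm
  -- bound on T
  have hTb : ∀ y, |T y| ≤ K := by
    intro y
    have h1 : Real.log (I y) ≤ K / ε := by
      calc Real.log (I y) ≤ Real.log (Real.exp (K / ε)) :=
        Real.log_le_log (hIpos y) (hIub y)
      _ = K / ε := Real.log_exp _
    have h2 : -(K / ε) ≤ Real.log (I y) := by
      calc -(K / ε) = Real.log (Real.exp (-K / ε)) := by rw [Real.log_exp]; ring
      _ ≤ Real.log (I y) := Real.log_le_log (Real.exp_pos _) (hIlb y)
    have habs : |Real.log (I y)| ≤ K / ε := abs_le.2 ⟨h2, h1⟩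
    rw [hT y, abs_mul, abs_neg, abs_of_pos hε]
    calc ε * |Real.log (I y)| ≤ ε * (K / ε) := by nlinarith [habs, hε]
    _ = K := by field_simp
  -- the inner integral with ψ factored out
  have hfactor : ∀ (g : β → ℝ) (y : β),
      (∫ x, Real.exp ((φ x + g y - c x y) / ε) ∂μ) = Real.exp ((g y - T y) / ε) := by
    intro g y
    have : ∀ x, Real.exp ((φ x + g y - c x y) / ε)
        = Real.exp (g y / ε) * Real.exp ((φ x - c x y) / ε) := by
      intro x
      rw [← Real.exp_add]
      congr 1
      ring
    simp_rw [this]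
    rw [integral_const_mul]
    rw [show (∫ x, Real.exp ((φ x - c x y) / ε) ∂μ) = I y from rfl, hIT y, ← Real.exp_add]
    congr 1
    ring
  -- pointwise statement
  have hpt : ∀ y, ψ y - ε * ∫ x, Real.exp ((φ x + ψ y - c x y) / ε) ∂μ + ε ≤ T y
      ∧ (ψ y - ε * ∫ x, Real.exp ((φ x + ψ y - c x y) / ε) ∂μ + ε = T y ↔ ψ y = T y) := by
    intro y
    rw [hfactor ψ y]
    set u : ℝ := (ψ y - T y) / ε with hu
    have hu1 : ψ y - T y = ε * u := by rw [hu]; field_simp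
    have key : u + 1 ≤ Real.exp u := Real.add_one_le_exp u
    constructor
    · nlinarith [key, hε]
    · constructor
      · intro h
        by_contra hne
        have hune : u ≠ 0 := by
          intro h0
          apply hne
          have : ψ y - T y = 0 := by rw [hu1, h0]; ring
          linarith
        have := Real.add_one_lt_exp hune
        nlinarith [this, hε]
      · intro h
        have : u = 0 := by rw [hu, h]; simp
        rw [this]
        simp
        linarith [h]
  refine ⟨hpt, ?_, ?_⟩
  -- measurability / integrability facts for the ν-integrals
  · have hTm : Measurable T := by
      have hIm : Measurable I := by
        have := (hmeas2.stronglyMeasurable.integral_prod_left' (μ := μ)).measurable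
        exact this
      have heq : T = fun y => -ε * Real.log (I y) := funext hT
      rw [heq]
      exact (hIm.log).const_mul (-ε)
    have hGm : Measurable fun y => Real.exp ((ψ y - T y) / ε) :=
      (((hψm.sub hTm).div_const ε)).exp
    have hGb : ∀ y, |Real.exp ((ψ y - T y) / ε)| ≤ Real.exp ((Mψ + K) / ε) := by
      intro y
      rw [abs_of_nonneg (Real.exp_pos _).le]
      apply Real.exp_le_exp.2
      apply div_le_div_of_nonneg_right ?_ hε.le
      have := abs_le.1 (hψb y); have := abs_le.1 (hTb y)
      linarith [(abs_le.1 (hψb y)).2, (abs_le.1 (hTb y)).1]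
    have hintG : Integrable (fun y => Real.exp ((ψ y - T y) / ε)) ν :=
      integrable_of_bdd ν hGm _ hGb
    have hintψ : Integrable ψ ν := integrable_of_bdd ν hψm Mψ hψb
    have hintT : Integrable T ν := integrable_of_bdd ν hTm K hTb
    -- Fubini for the product integral
    have hprodm : Measurable (fun p : α × β => Real.exp ((φ p.1 + ψ p.2 - c p.1 p.2) / ε)) :=
      ((((hφm.comp measurable_fst).add (hψm.comp measurable_snd)).sub hcm).div_const ε).exp
    have hprodint : Integrable (fun p : α × β => Real.exp ((φ p.1 + ψ p.2 - c p.1 p.2) / ε))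
        (μ.prod ν) := by
      refine integrable_of_bdd _ hprodm (Real.exp ((Mφ + Mψ + Mc) / ε)) ?_
      intro p
      rw [abs_of_nonneg (Real.exp_pos _).le]
      apply Real.exp_le_exp.2
      apply div_le_div_of_nonneg_right ?_ hε.le
      have h1 := abs_le.1 (hφb p.1); have h2 := abs_le.1 (hψb p.2)
      have h3 := abs_le.1 (hcb p.1 p.2)
      linarith [h1.2, h2.2, h3.1]
    have hfub : (∫ p, Real.exp ((φ p.1 + ψ p.2 - c p.1 p.2) / ε) ∂(μ.prod ν))
        = ∫ y, Real.exp ((ψ y - T y) / ε) ∂ν := by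
      rw [integral_prod_symm _ hprodint]
      exact integral_congr_ae (ae_of_all _ (fun y => hfactor ψ y))
    rw [hfub]
    have hle : (∫ y, ψ y ∂ν) - ε * ∫ y, Real.exp ((ψ y - T y) / ε) ∂ν + ε ≤ ∫ y, T y ∂ν := by
      have h1 : Integrable (fun y => ψ y - ε * Real.exp ((ψ y - T y) / ε)) ν :=
        hintψ.sub (hintG.const_mul ε)
      have h2 : Integrable (fun y => ε * Real.exp ((ψ y - T y) / ε)) ν := hintG.const_mul ε
      have : (∫ y, ψ y ∂ν) - ε * (∫ y, Real.exp ((ψ y - T y) / ε) ∂ν) + ε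
          = ∫ y, (ψ y - ε * Real.exp ((ψ y - T y) / ε) + ε) ∂ν := by
        rw [integral_add h1 (integrable_const ε), integral_sub hintψ h2, integral_const_mul ε]
        simp
      rw [this]
      apply integral_mono (h1.add (integrable_const ε)) hintT
      intro y
      have := (hpt y).1
      rwa [hfactor ψ y] at this
    linarith [hle]
  · -- equality case at ψ = T
    have hTm : Measurable T := by
      have hIm : Measurable I :=
        (hmeas2.stronglyMeasurable.integral_prod_left' (μ := μ)).measurable
      have heq : T = fun y => -ε * Real.log (I y) := funext hT
      rw [heq]
      exact (hIm.log).const_mul (-ε)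
    have hprodm : Measurable (fun p : α × β => Real.exp ((φ p.1 + T p.2 - c p.1 p.2) / ε)) :=
      ((((hφm.comp measurable_fst).add (hTm.comp measurable_snd)).sub hcm).div_const ε).exp
    have hprodint : Integrable (fun p : α × β => Real.exp ((φ p.1 + T p.2 - c p.1 p.2) / ε))
        (μ.prod ν) := by
      refine integrable_of_bdd _ hprodm (Real.exp ((Mφ + K + Mc) / ε)) ?_
      intro p
      rw [abs_of_nonneg (Real.exp_pos _).le]
      apply Real.exp_le_exp.2
      apply div_le_div_of_nonneg_right ?_ hε.le
      have h1 := abs_le.1 (hφb p.1); have h2 := abs_le.1 (hTb p.2)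
      have h3 := abs_le.1 (hcb p.1 p.2)
      linarith [h1.2, h2.2, h3.1]
    have hfub : (∫ p, Real.exp ((φ p.1 + T p.2 - c p.1 p.2) / ε) ∂(μ.prod ν)) = 1 := by
      rw [integral_prod_symm _ hprodint]
      have : ∀ y, (∫ x, Real.exp ((φ x + T y - c x y) / ε) ∂μ) = 1 := by
        intro y
        rw [hfactor T y]
        simp
      rw [integral_congr_ae (ae_of_all _ this)]
      simp
    rw [hfub]
    ring
end

section
/- Let μ, ν be probability measures, c bounded measurable, ε > 0, and let π ∈ Π(μ,ν) be any coupling with π ≪ μ⊗ν. For any bounded measurable (φ, ψ), the duality gap identity holds: [∫c dπ + ε D_KL(π‖μ⊗ν)] - [∫φdμ + ∫ψdν - ε∫exp((φ⊕ψ-c)/ε)dμ⊗ν + ε] = ε D_KL(π ‖ π_{φ,ψ}) + ε(∫exp((φ⊕ψ-c)/ε)dμ⊗ν - 1 - log∫exp((φ⊕ψ-c)/ε)dμ⊗ν) ≥ 0, where dπ_{φ,ψ} = exp((φ⊕ψ-c)/ε)dμ⊗ν / ∫exp((φ⊕ψ-c)/ε)dμ⊗ν. In particular weak duality holds: the primal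 EOT value is at least the dual objective for every (φ,ψ). -/
open MeasureTheory

/-- Nonnegativity of the (real-valued) KL divergence between probability measures,
assuming absolute continuity and integrability of the log-likelihood ratio. -/
lemma integral_llr_nonneg' {α : Type*} [MeasurableSpace α] {π σ : Measure α}
    [IsProbabilityMeasure π] [IsProbabilityMeasure σ]
    (hac : π ≪ σ) (hint : Integrable (llr π σ) π) :
    0 ≤ ∫ x, llr π σ x ∂π := by
  have hσint : Integrable (fun x => (σ.rnDeriv π x).toReal) π :=
    Measure.integrable_toReal_rnDeriv
  have hbound : (fun x => 1 - (σ.rnDeriv π x).toReal) ≤ᵐ[π] llr π σ := by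
    filter_upwards [Measure.inv_rnDeriv hac, Measure.rnDeriv_pos hac,
      hac.ae_le (Measure.rnDeriv_lt_top π σ)] with x hinv hpos hlt
    have hg : 0 < (π.rnDeriv σ x).toReal := ENNReal.toReal_pos hpos.ne' hlt.ne
    have h1 : Real.log (π.rnDeriv σ x).toReal⁻¹ ≤ (π.rnDeriv σ x).toReal⁻¹ - 1 :=
      Real.log_le_sub_one_of_pos (inv_pos.mpr hg)
    rw [Real.log_inv] at h1
    have h2 : (σ.rnDeriv π x).toReal = (π.rnDeriv σ x).toReal⁻¹ := by
      rw [← hinv, Pi.inv_apply, ENNReal.toReal_inv]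
    rw [llr]
    rw [h2]
    linarith
  have hle : ∫ x, (σ.rnDeriv π x).toReal ∂π ≤ 1 := by
    have h := Measure.setIntegral_toReal_rnDeriv_le (μ := σ) (ν := π)
      (s := Set.univ) (measure_ne_top σ _)
    rw [setIntegral_univ] at h
    simpa using h
  have hmono : ∫ x, (1 - (σ.rnDeriv π x).toReal) ∂π ≤ ∫ x, llr π σ x ∂π :=
    integral_mono_ae ((integrable_const (1 : ℝ)).sub hσint) hint hbound
  have : ∫ x, (1 - (σ.rnDeriv π x).toReal) ∂π
      = 1 - ∫ x, (σ.rnDeriv π x).toReal ∂π := by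
    rw [integral_sub (integrable_const _) hσint]
    simp
  rw [this] at hmono
  linarith

/-- Duality-gap identity: for any coupling `π ≪ μ⊗ν` and bounded measurable `(φ,ψ)`,
`primal(π) - D(φ,ψ) = ε D_KL(π‖π_{φ,ψ}) + ε (A - 1 - log A) ≥ 0`, where
`A = ∬ exp((φ⊕ψ-c)/ε) d(μ⊗ν)` and `dπ_{φ,ψ} = exp((φ⊕ψ-c)/ε) d(μ⊗ν) / A`.
In particular weak duality holds. -/
theorem stmt_16 {α β : Type*} [MeasurableSpace α] [MeasurableSpace β]
    (μ : Measure α) (ν : Measure β)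
    [IsProbabilityMeasure μ] [IsProbabilityMeasure ν]
    (c : α → β → ℝ)
    (hcm : Measurable fun p : α × β => c p.1 p.2)
    (Mc : ℝ) (hcb : ∀ x y, |c x y| ≤ Mc)
    (ε : ℝ) (hε : 0 < ε)
    (π : Measure (α × β)) [IsProbabilityMeasure π]
    (hπ1 : π.map Prod.fst = μ) (hπ2 : π.map Prod.snd = ν)
    (hac : π ≪ μ.prod ν)
    (hlog : Integrable (fun p => Real.log ((π.rnDeriv (μ.prod ν) p).toReal)) π)
    (φ : α → ℝ) (hφm : Measurable φ) (Mφ : ℝ) (hφb : ∀ x, |φ x| ≤ Mφ)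
    (ψ : β → ℝ) (hψm : Measurable ψ) (Mψ : ℝ) (hψb : ∀ y, |ψ y| ≤ Mψ)
    (A : ℝ) (hA : A = ∫ p, Real.exp ((φ p.1 + ψ p.2 - c p.1 p.2) / ε) ∂(μ.prod ν))
    (πφψ : Measure (α × β))
    (hπφψ : πφψ = (μ.prod ν).withDensity fun p =>
      ENNReal.ofReal (Real.exp ((φ p.1 + ψ p.2 - c p.1 p.2) / ε) / A)) :
    ((∫ p, c p.1 p.2 ∂π + ε * klDiv' π (μ.prod ν))
        - (∫ x, φ x ∂μ + ∫ y, ψ y ∂ν - ε * A + ε)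
      = ε * klDiv' π πφψ + ε * (A - 1 - Real.log A))
    ∧ 0 ≤ ε * klDiv' π πφψ + ε * (A - 1 - Real.log A)
    ∧ (∫ x, φ x ∂μ + ∫ y, ψ y ∂ν - ε * A + ε
        ≤ ∫ p, c p.1 p.2 ∂π + ε * klDiv' π (μ.prod ν)) := by
  set ρ : Measure (α × β) := μ.prod ν with hρ
  set f : α × β → ℝ := fun p => (φ p.1 + ψ p.2 - c p.1 p.2) / ε with hf
  have hfm : Measurable f := ((hφm.comp measurable_fst).add
    (hψm.comp measurable_snd)).sub hcm |>.div_const ε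
  -- boundedness of f
  have hfb : ∀ p, |f p| ≤ (Mφ + Mψ + Mc) / ε := by
    intro p
    rw [hf, abs_div, abs_of_pos hε]
    apply div_le_div_of_nonneg_right ?_ hε.le |>.trans_eq rfl
    calc |φ p.1 + ψ p.2 - c p.1 p.2| ≤ |φ p.1| + |ψ p.2| + |c p.1 p.2| := by
          exact (abs_sub _ _).trans (by gcongr; exact abs_add_le _ _)
    _ ≤ Mφ + Mψ + Mc := by gcongr <;> [exact hφb _; exact hψb _; exact hcb _ _]
  -- integrability of bounded measurable functions against probability measures
  have hint_of_bdd : ∀ (g : α × β → ℝ) (M : ℝ) (m : Measure (α × β))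
      [IsProbabilityMeasure m], Measurable g → (∀ p, |g p| ≤ M) → Integrable g m := by
    intro g M m _ hgm hgb
    refine (integrable_const M).mono' hgm.aestronglyMeasurable (ae_of_all _ ?_)
    intro p; simpa using hgb p
  have hfπ : Integrable f π := hint_of_bdd f _ π hfm hfb
  have hfρ : Integrable (fun p => Real.exp (f p)) ρ := by
    refine hint_of_bdd _ (Real.exp ((Mφ + Mψ + Mc) / ε)) ρ hfm.exp fun p => ?_
    rw [abs_of_pos (Real.exp_pos _)]
    exact Real.exp_le_exp.mpr ((le_abs_self _).trans (hfb p))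
  have hcπ : Integrable (fun p : α × β => c p.1 p.2) π := hint_of_bdd _ Mc π hcm fun p => hcb _ _
  have hφπ : Integrable (fun p : α × β => φ p.1) π :=
    hint_of_bdd _ Mφ π (hφm.comp measurable_fst) fun p => hφb _
  have hψπ : Integrable (fun p : α × β => ψ p.2) π :=
    hint_of_bdd _ Mψ π (hψm.comp measurable_snd) fun p => hψb _
  -- A is the exponential integral and is positive
  have hA' : A = ∫ p, Real.exp (f p) ∂ρ := hA
  have hApos : 0 < A := hA' ▸ integral_exp_pos hfρ
  -- πφψ is the tilted measure
  have htilt : πφψ = ρ.tilted f := by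
    rw [hπφψ, Measure.tilted, ← hA']
  -- marginals
  have hΦ : ∫ p, φ p.1 ∂π = ∫ x, φ x ∂μ := by
    rw [← hπ1, integral_map measurable_fst.aemeasurable hφm.aestronglyMeasurable]
  have hΨ : ∫ p, ψ p.2 ∂π = ∫ y, ψ y ∂ν := by
    rw [← hπ2, integral_map measurable_snd.aemeasurable hψm.aestronglyMeasurable]
  -- value of ∫ f dπ
  have hFint : ∫ p, f p ∂π
      = (∫ x, φ x ∂μ + ∫ y, ψ y ∂ν - ∫ p, c p.1 p.2 ∂π) / ε := by
    rw [hf]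
    simp only [div_eq_mul_inv]
    rw [integral_mul_const]
    congr 1
    have h12 : Integrable (fun p : α × β => φ p.1 + ψ p.2) π := hφπ.add hψπ
    rw [integral_sub h12 hcπ, integral_add hφπ hψπ, hΦ, hΨ]
  -- KL divergences as llr integrals
  have hkl1 : klDiv' π ρ = ∫ p, llr π ρ p ∂π := rfl
  have hkl2 : klDiv' π πφψ = ∫ p, llr π πφψ p ∂π := rfl
  have hlog' : Integrable (llr π ρ) π := hlog
  -- the tilted-measure llr integral identity
  have hmain : ∫ p, llr π πφψ p ∂π
      = ∫ p, llr π ρ p ∂π - ∫ p, f p ∂π + Real.log A := by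
    rw [htilt, integral_llr_tilted_right hac hfπ hfρ hlog', hA']
  -- nonnegativity of KL(π ‖ πφψ)
  have hprob : IsProbabilityMeasure πφψ := by
    rw [htilt]; exact isProbabilityMeasure_tilted hfρ
  have hacπφψ : π ≪ πφψ := by
    rw [htilt]; exact hac.trans (absolutelyContinuous_tilted hfρ)
  have hllrint : Integrable (llr π πφψ) π := by
    rw [htilt]; exact integrable_llr_tilted_right hac hfπ hlog' hfρ
  have hklnn : 0 ≤ klDiv' π πφψ := by
    rw [hkl2]; exact integral_llr_nonneg' hacπφψ hllrint
  -- nonnegativity of A - 1 - log A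
  have hAnn : 0 ≤ A - 1 - Real.log A := by
    have := Real.log_le_sub_one_of_pos hApos
    linarith
  -- the identity
  have keyF : ε * ∫ p, f p ∂π
      = ∫ x, φ x ∂μ + ∫ y, ψ y ∂ν - ∫ p, c p.1 p.2 ∂π := by
    rw [hFint, mul_div_cancel₀ _ hε.ne']
  have hId : (∫ p, c p.1 p.2 ∂π + ε * klDiv' π ρ)
        - (∫ x, φ x ∂μ + ∫ y, ψ y ∂ν - ε * A + ε)
      = ε * klDiv' π πφψ + ε * (A - 1 - Real.log A) := by
    rw [hkl2, hmain, ← hkl1]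
    have : ε * (klDiv' π ρ - ∫ p, f p ∂π + Real.log A)
        = ε * klDiv' π ρ - ε * ∫ p, f p ∂π + ε * Real.log A := by ring
    rw [this, keyF]
    ring
  refine ⟨hId, ?_, ?_⟩
  · have h1 : 0 ≤ ε * klDiv' π πφψ := mul_nonneg hε.le hklnn
    have h2 : 0 ≤ ε * (A - 1 - Real.log A) := mul_nonneg hε.le hAnn
    linarith
  · have h1 : 0 ≤ ε * klDiv' π πφψ := mul_nonneg hε.le hklnn
    have h2 : 0 ≤ ε * (A - 1 - Real.log A) := mul_nonneg hε.le hAnn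
    linarith [hId]
end
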